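/- Consider the Abel equation x' = (a₀ + a₁cos(2πt) + a₂sin(2πt))x³ + (b₀ + b₁cos(2πt) + b₂sin(2πt))x², with a₀, a₁, a₂, b₀, b₁, b₂ real numbers. This equation has a center at x = 0 if and only if a₀ = 0, b₀ = 0 and a₂b₁ − a₁b₂ = 0. -/

import Mathlib

/-- `γ : ℝ → ℝ` is a solution of the Abel equation `x' = A(t)x³ + B(t)x²` on `[0,1]`. -/
def IsAbelSolution (A B : ℝ → ℝ) (γ : ℝ → ℝ) : Prop :=
  ∀ t ∈ Set.Icc (0:ℝ) 1,
    HasDerivWithinAt γ (A t * γ t ^ 3 + B t * γ t ^ 2) (Set.Icc (0:ℝ) 1) t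

/-- The Abel equation has a center at `x = 0`: all solutions starting close enough
to `0` are defined on all of `[0,1]` and are periodic orbits. -/
def HasCenterAtZero (A B : ℝ → ℝ) : Prop :=
  ∃ ε > (0:ℝ), ∀ ρ : ℝ, |ρ| < ε →
    ∃ γ : ℝ → ℝ, IsAbelSolution A B γ ∧ γ 0 = ρ ∧ γ 0 = γ 1

/-!
If `A = α c` and `B = β c` with `c = c₁ cos 2πt + c₂ sin 2πt`, every solution near `0` is
`y ∘ w`, where `w` is the primitive of `c` vanishing at `0` (hence at `1`) and `y` solves the
autonomous equation `y' = α y³ + β y²`; so `x(0) = x(1)`.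

Conversely, a solution with `x(0) = ρ > 0` small stays within `O(ρ²)` of `ρ`, and
`x(t) = ρ + ρ² ∫₀ᵗ B + O(ρ³)`. Since `(1/x)' = -(A x + B)`, periodicity gives
`∫₀¹ (A x + B) = 0`, which expands to `∫₀¹ B + ρ ∫₀¹ A + ρ² ∫₀¹ A(t) ∫₀ᵗ B = O(ρ³)`. Hence the three
moments vanish, and for trigonometric coefficients the last one is `(a₂ b₁ - a₁ b₂) / (4π)`.
-/

open Real Set Filter Topology Metric Asymptotics intervalIntegral
open scoped NNReal

theorem integral_eq_sub_of_hasDerivWithinAt_Icc {f f' : ℝ → ℝ} {a b t : ℝ}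
    (hf : ∀ x ∈ Icc a b, HasDerivWithinAt f (f' x) (Icc a b) x) (hf' : ContinuousOn f' (Icc a b))
    (ht : t ∈ Icc a b) :
    ∫ s in a..t, f' s = f t - f a := by
  have hsub : Icc a t ⊆ Icc a b := Icc_subset_Icc_right ht.2
  refine integral_eq_sub_of_hasDerivAt_of_le ht.1
    (fun x hx => (hf x (hsub hx)).continuousWithinAt.mono hsub) (fun x hx => ?_)
    ((hf'.mono hsub).intervalIntegrable_of_Icc ht.1)
  exact (hf x (hsub (Ioo_subset_Icc_self hx))).hasDerivAt
    (Icc_mem_nhds hx.1 (hx.2.trans_le ht.2))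

theorem eq_zero_of_eventually_abs_le {f g : ℝ → ℝ} (hf : Continuous f) (hg : Continuous g)
    (hg0 : g 0 = 0) (h : ∀ᶠ ρ in 𝓝[>] 0, |f ρ| ≤ g ρ) : f 0 = 0 := by
  have := le_of_tendsto_of_tendsto (hf.abs.continuousWithinAt (s := Ioi 0) (x := 0)).tendsto
    hg.continuousWithinAt.tendsto h
  rwa [hg0, abs_nonpos_iff] at this

theorem coeffs_eq_zero_of_abs_le_mul_cube {p q r C : ℝ}
    (h : ∀ᶠ ρ in 𝓝[>] 0, |p + q * ρ + r * ρ ^ 2| ≤ C * ρ ^ 3) : p = 0 ∧ q = 0 ∧ r = 0 := by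
  have hp : p = 0 := by
    simpa using eq_zero_of_eventually_abs_le (f := fun ρ => p + q * ρ + r * ρ ^ 2)
      (g := fun ρ => C * ρ ^ 3) (by fun_prop) (by fun_prop) (by simp) h
  subst hp
  have hq : q = 0 := by
    have h' : ∀ᶠ ρ in 𝓝[>] 0, |q + r * ρ| ≤ C * ρ ^ 2 := by
      filter_upwards [h, self_mem_nhdsWithin] with ρ hρ (hρ0 : 0 < ρ)
      rw [show 0 + q * ρ + r * ρ ^ 2 = ρ * (q + r * ρ) by ring, abs_mul, abs_of_pos hρ0,
        show C * ρ ^ 3 = ρ * (C * ρ ^ 2) by ring] at hρ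
      exact le_of_mul_le_mul_left hρ hρ0
    simpa using eq_zero_of_eventually_abs_le (f := fun ρ => q + r * ρ)
      (g := fun ρ => C * ρ ^ 2) (by fun_prop) (by fun_prop) (by simp) h'
  subst hq
  have h' : ∀ᶠ ρ in 𝓝[>] 0, |r| ≤ C * ρ := by
    filter_upwards [h, self_mem_nhdsWithin] with ρ hρ (hρ0 : 0 < ρ)
    rw [show 0 + 0 * ρ + r * ρ ^ 2 = ρ ^ 2 * r by ring, abs_mul, abs_of_pos (by positivity),
      show C * ρ ^ 3 = ρ ^ 2 * (C * ρ) by ring] at hρ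
    exact le_of_mul_le_mul_left hρ (by positivity)
  exact ⟨rfl, rfl, eq_zero_of_eventually_abs_le (f := fun _ => r) (g := fun ρ => C * ρ)
    (by fun_prop) (by fun_prop) (by simp) h'⟩

theorem abs_le_two_mul_of_abs_sub_le {x ρ : ℝ} (h : |x - ρ| ≤ ρ) : |x| ≤ 2 * ρ := by
  have := abs_sub_abs_le_abs_sub x ρ
  rw [abs_of_nonneg ((abs_nonneg _).trans h)] at this
  linarith

theorem abs_abel_field_le {K ρ : ℝ} (hK : 1 ≤ K) (hρ : 0 ≤ ρ) (hρK : 8 * K * ρ ≤ 1) {a b x : ℝ}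
    (ha : |a| ≤ K) (hb : |b| ≤ K) (hx : |x| ≤ 2 * ρ) :
    |a * x ^ 3 + b * x ^ 2| ≤ 5 * K * ρ ^ 2 := by
  have hx2 : |x| ^ 2 ≤ 4 * ρ ^ 2 := by nlinarith [abs_nonneg x]
  have hx3 : |x| ^ 3 ≤ ρ ^ 2 := by
    have : 8 * ρ ≤ 1 := by nlinarith
    nlinarith [abs_nonneg x]
  calc |a * x ^ 3 + b * x ^ 2| ≤ |a| * |x| ^ 3 + |b| * |x| ^ 2 := by
        rw [← abs_pow, ← abs_pow, ← abs_mul, ← abs_mul]; exact abs_add_le _ _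
    _ ≤ K * ρ ^ 2 + K * (4 * ρ ^ 2) := by gcongr
    _ = 5 * K * ρ ^ 2 := by ring

section Necessity

variable {A B γ : ℝ → ℝ} {K ρ : ℝ}

theorem IsAbelSolution.continuousOn (hγ : IsAbelSolution A B γ) : ContinuousOn γ (Icc 0 1) :=
  fun t ht => (hγ t ht).continuousWithinAt

theorem IsAbelSolution.hasDerivWithinAt_Ici (hγ : IsAbelSolution A B γ) {t : ℝ}
    (ht : t ∈ Ico (0 : ℝ) 1) :
    HasDerivWithinAt γ (A t * γ t ^ 3 + B t * γ t ^ 2) (Ici t) t :=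
  (hγ t (Ico_subset_Icc_self ht)).mono_of_mem_nhdsWithin <|
    mem_of_superset (Ico_mem_nhdsGE ht.2) fun _ hs => ⟨ht.1.trans hs.1, hs.2.le⟩

theorem IsAbelSolution.integral_mul_add_eq_zero (hγ : IsAbelSolution A B γ) (hA : Continuous A)
    (hB : Continuous B) (hne : ∀ t ∈ Icc (0 : ℝ) 1, γ t ≠ 0) (hper : γ 0 = γ 1) :
    ∫ t in (0 : ℝ)..1, (A t * γ t + B t) = 0 := by
  have hinv : ∀ t ∈ Icc (0 : ℝ) 1,
      HasDerivWithinAt (fun t => (γ t)⁻¹) (-(A t * γ t + B t)) (Icc 0 1) t := fun t ht =>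
    ((hγ t ht).inv (hne t ht)).congr_deriv (by field_simp [hne t ht])
  have := integral_eq_sub_of_hasDerivWithinAt_Icc hinv
    ((hA.continuousOn.mul hγ.continuousOn).add hB.continuousOn).neg (right_mem_Icc.2 zero_le_one)
  rwa [integral_neg, hper, sub_self, neg_eq_zero] at this

variable (hγ : IsAbelSolution A B γ) (hK : 1 ≤ K)
    (hAK : ∀ t ∈ Icc (0 : ℝ) 1, |A t| ≤ K) (hBK : ∀ t ∈ Icc (0 : ℝ) 1, |B t| ≤ K)
    (hρ : 0 < ρ) (hρK : 8 * K * ρ ≤ 1) (h0 : γ 0 = ρ)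
include hγ hK hAK hBK hρ hρK h0

theorem IsAbelSolution.abs_sub_le {t : ℝ} (ht : t ∈ Icc (0 : ℝ) 1) :
    |γ t - ρ| ≤ 6 * K * ρ ^ 2 := by
  have key := image_norm_le_of_norm_deriv_right_lt_deriv_boundary (f := fun t => γ t - ρ)
    (B := fun t => 6 * K * ρ ^ 2 * t) (B' := fun _ => 6 * K * ρ ^ 2)
    (hγ.continuousOn.sub continuousOn_const)
    (fun s hs => (hγ.hasDerivWithinAt_Ici hs).sub_const ρ) (by simp [h0])
    (fun s => by simpa using (hasDerivAt_id s).const_mul (6 * K * ρ ^ 2))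
    (fun s hs hsB => ?_) ht
  · exact key.trans (mul_le_of_le_one_right (by positivity) ht.2)
  · have hs := Ico_subset_Icc_self hs
    have hγs : |γ s| ≤ 2 * ρ := by
      refine abs_le_two_mul_of_abs_sub_le ?_
      have h6 : 6 * K * ρ ^ 2 * s ≤ 6 * K * ρ ^ 2 := mul_le_of_le_one_right (by positivity) hs.2
      rw [← Real.norm_eq_abs, hsB]; nlinarith
    calc ‖A s * γ s ^ 3 + B s * γ s ^ 2‖ ≤ 5 * K * ρ ^ 2 :=
          abs_abel_field_le hK hρ.le hρK (hAK s hs) (hBK s hs) hγs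
      _ < 6 * K * ρ ^ 2 := by nlinarith [sq_pos_of_pos hρ]

theorem IsAbelSolution.abs_sub_sub_integral_le (hA : Continuous A) (hB : Continuous B) {t : ℝ}
    (ht : t ∈ Icc (0 : ℝ) 1) :
    |γ t - ρ - ρ ^ 2 * ∫ s in (0 : ℝ)..t, B s| ≤ (8 * K + 18 * K ^ 2) * ρ ^ 3 := by
  have hsub : Icc 0 t ⊆ Icc (0 : ℝ) 1 := Icc_subset_Icc_right ht.2
  have hγc := hγ.continuousOn
  have hftc := integral_eq_sub_of_hasDerivWithinAt_Icc hγ (by fun_prop) ht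
  have hrem : γ t - ρ - ρ ^ 2 * ∫ s in (0 : ℝ)..t, B s
      = ∫ s in (0 : ℝ)..t, (A s * γ s ^ 3 + B s * ((γ s - ρ) * (γ s + ρ))) := by
    rw [← h0, ← hftc, ← integral_const_mul, ← integral_sub]
    · exact integral_congr fun s _ => by ring
    all_goals exact (ContinuousOn.mono (by fun_prop) hsub).intervalIntegrable_of_Icc ht.1
  rw [hrem, ← Real.norm_eq_abs]
  refine (norm_integral_le_of_norm_le_const (C := (8 * K + 18 * K ^ 2) * ρ ^ 3)
    fun s hs => ?_).trans ?_
  · rw [uIoc_of_le ht.1] at hs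
    have hs : s ∈ Icc (0 : ℝ) 1 := hsub (Ioc_subset_Icc_self hs)
    have hdiff := hγ.abs_sub_le hK hAK hBK hρ hρK h0 hs
    have hγs : |γ s| ≤ 2 * ρ := abs_le_two_mul_of_abs_sub_le (by nlinarith)
    have hsum : |γ s + ρ| ≤ 3 * ρ := by
      have := abs_add_le (γ s) ρ; rw [abs_of_pos hρ] at this; linarith
    rw [Real.norm_eq_abs]
    calc |A s * γ s ^ 3 + B s * ((γ s - ρ) * (γ s + ρ))|
        ≤ |A s| * |γ s| ^ 3 + |B s| * (|γ s - ρ| * |γ s + ρ|) := by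
          rw [← abs_pow, ← abs_mul, ← abs_mul, ← abs_mul]; exact abs_add_le _ _
      _ ≤ K * (2 * ρ) ^ 3 + K * (6 * K * ρ ^ 2 * (3 * ρ)) := by
          gcongr
          exacts [hAK s hs, hBK s hs]
      _ = (8 * K + 18 * K ^ 2) * ρ ^ 3 := by ring
  · rw [sub_zero, abs_of_nonneg ht.1]
    exact mul_le_of_le_one_right (by positivity) ht.2

theorem IsAbelSolution.abs_moments_le (hA : Continuous A) (hB : Continuous B) (hper : γ 0 = γ 1) :
    |(∫ t in (0 : ℝ)..1, B t) + (∫ t in (0 : ℝ)..1, A t) * ρ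
      + (∫ t in (0 : ℝ)..1, A t * ∫ s in (0 : ℝ)..t, B s) * ρ ^ 2|
      ≤ K * (8 * K + 18 * K ^ 2) * ρ ^ 3 := by
  set W : ℝ → ℝ := fun t => ∫ s in (0 : ℝ)..t, B s
  have hW : Continuous W := continuous_primitive (fun a b => hB.intervalIntegrable a b) 0
  have hγc := hγ.continuousOn
  have hγpos : ∀ t ∈ Icc (0 : ℝ) 1, 0 < γ t := fun t ht => by
    have := (abs_le.1 (hγ.abs_sub_le hK hAK hBK hρ hρK h0 ht)).1
    nlinarith
  have hzero := hγ.integral_mul_add_eq_zero hA hB (fun t ht => (hγpos t ht).ne') hper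
  have hsplit : (∫ t in (0 : ℝ)..1, B t) + (∫ t in (0 : ℝ)..1, A t) * ρ
      + (∫ t in (0 : ℝ)..1, A t * W t) * ρ ^ 2
      = (∫ t in (0 : ℝ)..1, (A t * γ t + B t))
        - ∫ t in (0 : ℝ)..1, A t * (γ t - ρ - ρ ^ 2 * W t) := by
    rw [← integral_mul_const, ← integral_mul_const, ← integral_add, ← integral_add,
      ← integral_sub]
    · exact integral_congr fun t _ => by ring
    all_goals exact ContinuousOn.intervalIntegrable_of_Icc zero_le_one (by fun_prop)
  rw [hsplit, hzero, zero_sub, abs_neg, ← Real.norm_eq_abs]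
  refine (norm_integral_le_of_norm_le_const (C := K * ((8 * K + 18 * K ^ 2) * ρ ^ 3))
    fun t ht => ?_).trans_eq (by norm_num [mul_assoc])
  rw [uIoc_of_le zero_le_one] at ht
  have ht := Ioc_subset_Icc_self ht
  rw [Real.norm_eq_abs, abs_mul]
  exact mul_le_mul (hAK t ht) (hγ.abs_sub_sub_integral_le hK hAK hBK hρ hρK h0 hA hB ht)
    (abs_nonneg _) (by linarith)

end Necessity

theorem HasCenterAtZero.moments_eq_zero {A B : ℝ → ℝ} (hA : Continuous A) (hB : Continuous B)
    (h : HasCenterAtZero A B) :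
    ∫ t in (0 : ℝ)..1, B t = 0 ∧ ∫ t in (0 : ℝ)..1, A t = 0 ∧
      ∫ t in (0 : ℝ)..1, A t * ∫ s in (0 : ℝ)..t, B s = 0 := by
  obtain ⟨KA, hKA⟩ := (isCompact_Icc (a := (0 : ℝ)) (b := 1)).exists_bound_of_continuousOn
    hA.continuousOn
  obtain ⟨KB, hKB⟩ := (isCompact_Icc (a := (0 : ℝ)) (b := 1)).exists_bound_of_continuousOn
    hB.continuousOn
  set K := max (max KA KB) 1
  have hK : 1 ≤ K := le_max_right _ _
  have hAK : ∀ t ∈ Icc (0 : ℝ) 1, |A t| ≤ K := fun t ht =>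
    (hKA t ht).trans ((le_max_left _ _).trans (le_max_left _ _))
  have hBK : ∀ t ∈ Icc (0 : ℝ) 1, |B t| ≤ K := fun t ht =>
    (hKB t ht).trans ((le_max_right _ _).trans (le_max_left _ _))
  obtain ⟨ε, hε, hsol⟩ := h
  refine coeffs_eq_zero_of_abs_le_mul_cube (C := K * (8 * K + 18 * K ^ 2)) ?_
  filter_upwards [Ioo_mem_nhdsGT (lt_min hε (by positivity : (0 : ℝ) < 1 / (8 * K)))]
    with ρ ⟨hρ, hρε⟩
  obtain ⟨γ, hγ, h0, hper⟩ := hsol ρ ((abs_of_pos hρ).trans_lt (hρε.trans_le (min_le_left _ _)))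
  have hρK : 8 * K * ρ ≤ 1 := by
    have := hρε.le.trans (min_le_right _ _)
    rwa [le_div_iff₀ (by positivity), mul_comm] at this
  exact hγ.abs_moments_le hK hAK hBK hρ hρK h0 hA hB hper

theorem exists_forall_norm_lt_exists_hasDerivWithinAt {E : Type*} [NormedAddCommGroup E]
    [NormedSpace ℝ E] [CompleteSpace E] {f : E → E} (hf : ContDiffAt ℝ 1 f 0)
    (hf₂ : f =O[𝓝 0] fun x => ‖x‖ ^ 2) {T : ℝ} (hT : 0 ≤ T) :
    ∃ ε > 0, ∀ x : E, ‖x‖ < ε → ∃ y : ℝ → E, y 0 = x ∧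
      ∀ s ∈ Icc (-T) T, HasDerivWithinAt y (f (y s)) (Icc (-T) T) s := by
  -- On a ball of radius `a` the field is bounded by `c a²`, so Picard-Lindelöf runs for a time
  -- of order `1 / (c a)`, which exceeds `T` once `a` is small.
  obtain ⟨K, U, hU, hK⟩ := hf.exists_lipschitzOnWith
  obtain ⟨c, hc, hcf⟩ := hf₂.exists_pos
  obtain ⟨a₀, ha₀, hball⟩ := Metric.mem_nhds_iff.1 (inter_mem hU hcf.bound)
  set a := min (a₀ / 2) (1 / (2 * c * (T + 1)))
  have ha : 0 < a := lt_min (by positivity) (by positivity)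
  have hsub : closedBall (0 : E) a ⊆ U ∩ {x | ‖f x‖ ≤ c * ‖‖x‖ ^ 2‖} :=
    (closedBall_subset_ball ((min_le_left _ _).trans_lt (half_lt_self ha₀))).trans hball
  have hpl : IsPicardLindelof (fun _ => f) (tmin := -T) (tmax := T) ⟨0, by simp [hT]⟩ 0
      (⟨a, ha.le⟩ : ℝ≥0) (⟨a / 2, by positivity⟩ : ℝ≥0) (⟨c * a ^ 2, by positivity⟩ : ℝ≥0) K := by
    refine .of_time_independent (fun x hx => ?_) (hK.mono fun x hx => (hsub hx).1) ?_
    · have hx' := (hsub hx).2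
      have : ‖x‖ ≤ a := mem_closedBall_zero_iff.1 hx
      rw [mem_ofPred_eq, norm_pow, norm_norm] at hx'
      change ‖f x‖ ≤ c * a ^ 2
      exact hx'.trans (by gcongr)
    · change c * a ^ 2 * max (T - 0) (0 - -T) ≤ a - a / 2
      have : c * a * (T + 1) ≤ 1 / 2 := calc
        c * a * (T + 1) ≤ c * (1 / (2 * c * (T + 1))) * (T + 1) := by
          gcongr; exact min_le_right _ _
        _ = 1 / 2 := by field_simp
      rw [sub_zero, zero_sub, neg_neg, max_self]
      nlinarith
  refine ⟨a / 2, half_pos ha, fun x hx => ?_⟩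
  exact hpl.exists_eq_forall_mem_Icc_hasDerivWithinAt (mem_closedBall_zero_iff.2 hx.le)

theorem hasCenterAtZero_of_hasDerivAt {c w : ℝ → ℝ} (hw : ∀ t, HasDerivAt w (c t) t)
    (hw0 : w 0 = 0) (hw1 : w 1 = 0) (α β : ℝ) :
    HasCenterAtZero (fun t => α * c t) (fun t => β * c t) := by
  obtain ⟨M, hM⟩ := (isCompact_Icc (a := (0 : ℝ)) (b := 1)).exists_bound_of_continuousOn
    (continuous_iff_continuousAt.2 fun t => (hw t).continuousAt).continuousOn
  have hf₂ : (fun x : ℝ => α * x ^ 3 + β * x ^ 2) =O[𝓝 0] fun x => ‖x‖ ^ 2 := by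
    have h1 := ((by fun_prop : Continuous fun x : ℝ => α * x + β).tendsto 0).isBigO_one ℝ
    refine (h1.mul (isBigO_refl (fun x : ℝ => ‖x‖ ^ 2) (𝓝 0))).congr
      (fun x => ?_) (fun x => one_mul _)
    simp only [Real.norm_eq_abs, sq_abs]
    ring
  have hM0 : 0 ≤ M := (norm_nonneg _).trans (hM 0 ⟨le_rfl, zero_le_one⟩)
  obtain ⟨ε, hε, hsol⟩ := exists_forall_norm_lt_exists_hasDerivWithinAt (by fun_prop) hf₂ hM0
  refine ⟨ε, hε, fun ρ hρ => ?_⟩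
  obtain ⟨y, hy0, hy⟩ := hsol ρ hρ
  have hmaps : MapsTo w (Icc 0 1) (Icc (-M) M) := fun t ht => abs_le.1 (hM t ht)
  refine ⟨y ∘ w, fun t ht => ?_, by simp [hw0, hy0], by simp [hw0, hw1]⟩
  exact ((hy (w t) (hmaps ht)).comp t (hw t).hasDerivWithinAt hmaps).congr_deriv
    (by simp only [Function.comp_apply]; ring)

theorem hasDerivAt_sin_two_pi_mul (t : ℝ) :
    HasDerivAt (fun t => sin (2 * π * t)) (2 * π * cos (2 * π * t)) t := by
  simpa [mul_comm] using ((hasDerivAt_id t).const_mul (2 * π)).sin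

theorem hasDerivAt_cos_two_pi_mul (t : ℝ) :
    HasDerivAt (fun t => cos (2 * π * t)) (-(2 * π * sin (2 * π * t))) t := by
  simpa [mul_comm] using ((hasDerivAt_id t).const_mul (2 * π)).cos

noncomputable def trigPrimitive (c₁ c₂ t : ℝ) : ℝ :=
  (c₁ * sin (2 * π * t) + c₂ * (1 - cos (2 * π * t))) / (2 * π)

theorem hasDerivAt_trigPrimitive (c₁ c₂ t : ℝ) :
    HasDerivAt (trigPrimitive c₁ c₂) (c₁ * cos (2 * π * t) + c₂ * sin (2 * π * t)) t := by
  have := (((hasDerivAt_sin_two_pi_mul t).const_mul c₁).add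
    (((hasDerivAt_cos_two_pi_mul t).const_sub 1).const_mul c₂)).div_const (2 * π)
  exact this.congr_deriv (by field_simp)

@[simp] theorem trigPrimitive_zero (c₁ c₂ : ℝ) : trigPrimitive c₁ c₂ 0 = 0 := by
  simp [trigPrimitive]

@[simp] theorem trigPrimitive_one (c₁ c₂ : ℝ) : trigPrimitive c₁ c₂ 1 = 0 := by
  simp [trigPrimitive]

theorem integral_trig_quadratic (p q r u v z : ℝ) :
    ∫ t in (0 : ℝ)..1, (p + q * cos (2 * π * t) + r * sin (2 * π * t)
      + u * cos (2 * π * t) ^ 2 + v * sin (2 * π * t) ^ 2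
      + z * (sin (2 * π * t) * cos (2 * π * t))) = p + (u + v) / 2 := by
  have hderiv : ∀ t ∈ uIcc (0 : ℝ) 1, HasDerivAt (fun t => p * t + trigPrimitive q r t
      + (u + v) / 2 * t + (u - v) * (sin (2 * π * t) * cos (2 * π * t)) / (4 * π)
      + z * sin (2 * π * t) ^ 2 / (4 * π))
      (p + q * cos (2 * π * t) + r * sin (2 * π * t) + u * cos (2 * π * t) ^ 2
        + v * sin (2 * π * t) ^ 2 + z * (sin (2 * π * t) * cos (2 * π * t))) t := by
    intro t _
    have hs := hasDerivAt_sin_two_pi_mul t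
    have hc := hasDerivAt_cos_two_pi_mul t
    have := (((((hasDerivAt_id t).const_mul p).add (hasDerivAt_trigPrimitive q r t)).add
      ((hasDerivAt_id t).const_mul ((u + v) / 2))).add
      (((hs.mul hc).const_mul (u - v)).div_const (4 * π))).add
      (((hs.pow 2).const_mul z).div_const (4 * π))
    refine this.congr_deriv ?_
    have := sin_sq_add_cos_sq (2 * π * t)
    field_simp
    linear_combination (-4 * (u + v)) * this
  rw [integral_eq_sub_of_hasDerivAt hderiv (by apply Continuous.intervalIntegrable; fun_prop)]
  simp

theorem integral_mul_trigPrimitive (a₁ a₂ b₁ b₂ : ℝ) :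
    ∫ t in (0 : ℝ)..1, (a₁ * cos (2 * π * t) + a₂ * sin (2 * π * t)) * trigPrimitive b₁ b₂ t
      = (a₂ * b₁ - a₁ * b₂) / (4 * π) := by
  have h := integral_trig_quadratic 0 (a₁ * b₂ / (2 * π)) (a₂ * b₂ / (2 * π))
    (-(a₁ * b₂) / (2 * π)) (a₂ * b₁ / (2 * π)) ((a₁ * b₁ - a₂ * b₂) / (2 * π))
  refine (integral_congr fun t _ => ?_).trans (h.trans ?_)
  · simp only [trigPrimitive]
    ring
  · field_simp
    ring

theorem exists_eq_mul_of_cross_eq_zero {a₁ a₂ b₁ b₂ : ℝ} (h : a₂ * b₁ - a₁ * b₂ = 0) :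
    ∃ α β c₁ c₂ : ℝ, a₁ = α * c₁ ∧ a₂ = α * c₂ ∧ b₁ = β * c₁ ∧ b₂ = β * c₂ := by
  by_cases hb : b₁ = 0 ∧ b₂ = 0
  · exact ⟨1, 0, a₁, a₂, by simp [hb.1, hb.2]⟩
  · have hd : b₁ ^ 2 + b₂ ^ 2 ≠ 0 := by
      contrapose! hb
      constructor <;> nlinarith [sq_nonneg b₁, sq_nonneg b₂]
    refine ⟨(a₁ * b₁ + a₂ * b₂) / (b₁ ^ 2 + b₂ ^ 2), 1, b₁, b₂, ?_, ?_, by ring, by ring⟩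
    · rw [div_mul_eq_mul_div, eq_div_iff hd]
      linear_combination (-b₂) * h
    · rw [div_mul_eq_mul_div, eq_div_iff hd]
      linear_combination b₁ * h

theorem trigonometric_abel_center_characterization
    (a₀ a₁ a₂ b₀ b₁ b₂ : ℝ) :
    HasCenterAtZero
      (fun t => a₀ + a₁ * Real.cos (2 * Real.pi * t) + a₂ * Real.sin (2 * Real.pi * t))
      (fun t => b₀ + b₁ * Real.cos (2 * Real.pi * t) + b₂ * Real.sin (2 * Real.pi * t)) ↔
    (a₀ = 0 ∧ b₀ = 0 ∧ a₂ * b₁ - a₁ * b₂ = 0) := by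
  constructor
  · intro h
    obtain ⟨hb₀, ha₀, hab⟩ := h.moments_eq_zero (by fun_prop) (by fun_prop)
    have hmean (p q r : ℝ) :
        ∫ t in (0 : ℝ)..1, (p + q * cos (2 * π * t) + r * sin (2 * π * t)) = p := by
      simpa using integral_trig_quadratic p q r 0 0 0
    rw [hmean] at ha₀ hb₀
    subst ha₀ hb₀
    have hW (t : ℝ) :
        ∫ s in (0 : ℝ)..t, (b₁ * cos (2 * π * s) + b₂ * sin (2 * π * s))
          = trigPrimitive b₁ b₂ t := by
      rw [integral_eq_sub_of_hasDerivAt (fun s _ => hasDerivAt_trigPrimitive b₁ b₂ s)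
        (by apply Continuous.intervalIntegrable; fun_prop), trigPrimitive_zero, sub_zero]
    simp only [zero_add, hW, integral_mul_trigPrimitive, div_eq_zero_iff] at hab
    exact ⟨rfl, rfl, hab.resolve_right (by positivity)⟩
  · rintro ⟨rfl, rfl, h⟩
    obtain ⟨α, β, c₁, c₂, rfl, rfl, rfl, rfl⟩ := exists_eq_mul_of_cross_eq_zero h
    convert hasCenterAtZero_of_hasDerivAt (hasDerivAt_trigPrimitive c₁ c₂)
      (trigPrimitive_zero c₁ c₂) (trigPrimitive_one c₁ c₂) α β using 2 <;> ring
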